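/- Let X and Y be complex Banach spaces, p ∈ [1,∞), and let 𝒯 be an R_p-bounded family of bounded linear operators from X to Y with bound C. Then the closure in the strong operator topology of the absolute convex hull aconv 𝒯 := {∑_{k=1}^n λ_k T_k : n ∈ ℕ, T_k ∈ 𝒯, λ_k ∈ ℂ, ∑_{k=1}^n |λ_k| = 1} is R_p-bounded with bound at most 2C. -/

import Mathlib

open scoped BigOperators

/-- Discrete sign formulation of `R_p`-boundedness of a family `𝒯 ⊆ L(X,Y)`
with bound `C`: for all `N`, all `T_1, …, T_N ∈ 𝒯` and `x_1, …, x_N ∈ X`,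
`(∑_{ε ∈ {−1,1}^N} ‖∑ j ε_j T_j x_j‖^p)^{1/p} ≤ C (∑_{ε ∈ {−1,1}^N} ‖∑ j ε_j x_j‖^p)^{1/p}`. -/
def IsRpBoundedWith (p : ℝ) {X Y : Type*} [NormedAddCommGroup X] [NormedSpace ℂ X]
    [NormedAddCommGroup Y] [NormedSpace ℂ Y] (𝒯 : Set (X →L[ℂ] Y)) (C : ℝ) : Prop :=
  ∀ (N : ℕ) (T : Fin N → X →L[ℂ] Y), (∀ j, T j ∈ 𝒯) → ∀ x : Fin N → X,
    (∑ ε : Fin N → Bool,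
        ‖∑ j, (if ε j then T j (x j) else -(T j (x j)))‖ ^ p) ^ (1 / p)
      ≤ C * (∑ ε : Fin N → Bool,
        ‖∑ j, (if ε j then x j else -(x j))‖ ^ p) ^ (1 / p)

/-- The absolute convex hull of a set of operators:
all finite combinations `∑ λ_k T_k` with `T_k ∈ 𝒯`, `λ_k ∈ ℂ`, `∑ |λ_k| = 1`. -/
def AbsConvexHull {X Y : Type*} [NormedAddCommGroup X] [NormedSpace ℂ X]
    [NormedAddCommGroup Y] [NormedSpace ℂ Y] (𝒯 : Set (X →L[ℂ] Y)) :
    Set (X →L[ℂ] Y) :=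
  {S | ∃ (n : ℕ) (T : Fin n → X →L[ℂ] Y) (l : Fin n → ℂ),
    (∀ k, T k ∈ 𝒯) ∧ (∑ k, ‖l k‖) = 1 ∧ S = ∑ k, l k • T k}

/-- The closure of a set of operators in the strong operator topology:
`S` belongs to it iff for every finite set of vectors and every `ε > 0` there
is a member of `𝒜` which is `ε`-close to `S` on these vectors. -/
def StrongOpClosure {X Y : Type*} [NormedAddCommGroup X] [NormedSpace ℂ X]
    [NormedAddCommGroup Y] [NormedSpace ℂ Y] (𝒜 : Set (X →L[ℂ] Y)) :
    Set (X →L[ℂ] Y) :=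
  {S | ∀ (N : ℕ) (x : Fin N → X) (ε : ℝ), 0 < ε →
    ∃ A ∈ 𝒜, ∀ j, ‖S (x j) - A (x j)‖ < ε}

/-! The Rademacher sum `‖y‖_Rad = (∑_ε ‖∑_j ε_j y_j‖^p)^{1/p}` is a continuous seminorm on `Y^N`
which does not change when the signs of the entries `y_j` are changed. Sign invariance makes
`𝒯 ∪ -𝒯` R-bounded with the same constant, and since `A ↦ ‖(A_j x_j)_j‖_Rad` is convex, the
maximum principle on a product of convex hulls passes the bound on to the real absolutely convex
hull. A complex multiple `θ T` with `|θ| ≤ 1` is `(Re θ) T + i (Im θ) T`, which costs the factor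
`2`; `aconv 𝒯` is a real convex hull of such multiples, and the bound is a closed condition on
`(A_j x_j)_j`, so it survives the strong closure. -/

open scoped ENNReal Pointwise

namespace Rademacher

variable {Z : Type*} [NormedAddCommGroup Z] [NormedSpace ℂ Z] {N : ℕ}

def signedSum (ε : Fin N → Bool) : (Fin N → Z) →L[ℂ] Z :=
  ∑ j, (if ε j then 1 else -1 : ℂ) • ContinuousLinearMap.proj j

theorem signedSum_apply (ε : Fin N → Bool) (y : Fin N → Z) :
    signedSum ε y = ∑ j, if ε j then y j else -(y j) := by
  simp only [signedSum, FunLike.coe_sum, Finset.sum_apply, FunLike.coe_smul, Pi.smul_apply,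
    ContinuousLinearMap.proj_apply]
  exact Finset.sum_congr rfl fun j _ => by split_ifs <;> simp

def signFlip (σ : Fin N → Bool) : Equiv.Perm (Fin N → Bool) where
  toFun ε j := ε j == σ j
  invFun ε j := ε j == σ j
  left_inv ε := by funext j; simp
  right_inv ε := by funext j; simp

end Rademacher

open Rademacher

section RademacherSeminorm

variable {Z : Type*} [NormedAddCommGroup Z] [NormedSpace ℂ Z] {N : ℕ} (p : ℝ≥0∞)

noncomputable def rademacherMap : (Fin N → Z) →L[ℂ] PiLp p (fun _ : Fin N → Bool => Z) :=
  (PiLp.continuousLinearEquiv p ℂ _).symm.toContinuousLinearMap.comp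
    (ContinuousLinearMap.pi signedSum)

variable [Fact (1 ≤ p)]

noncomputable def rademacherSeminorm : Seminorm ℂ (Fin N → Z) :=
  (normSeminorm ℂ _).comp (rademacherMap p).toLinearMap

theorem rademacherSeminorm_apply (y : Fin N → Z) :
    rademacherSeminorm p y = ‖WithLp.toLp p fun ε => signedSum ε y‖ := rfl

theorem rademacherSeminorm_eq_sum (hp : 0 < p.toReal) (y : Fin N → Z) :
    rademacherSeminorm p y =
      (∑ ε : Fin N → Bool, ‖∑ j, if ε j then y j else -(y j)‖ ^ p.toReal) ^ (1 / p.toReal) := by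
  simp [rademacherSeminorm_apply, PiLp.norm_eq_sum hp, signedSum_apply]

theorem continuous_rademacherSeminorm : Continuous (rademacherSeminorm p : (Fin N → Z) → ℝ) :=
  show Continuous fun y => ‖rademacherMap p y‖ from (rademacherMap p).continuous.norm

theorem rademacherSeminorm_signFlip (σ : Fin N → Bool) (y : Fin N → Z) :
    rademacherSeminorm p (fun j => if σ j then y j else -(y j)) = rademacherSeminorm p y := by
  have : (WithLp.toLp p fun ε => signedSum ε (fun j => if σ j then y j else -(y j))) =
      LinearIsometryEquiv.piLpCongrLeft p ℂ Z (signFlip σ)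
        (WithLp.toLp p fun ε => signedSum ε y) := by
    ext ε
    simp [LinearIsometryEquiv.piLpCongrLeft_apply, signedSum_apply, signFlip]
    refine Finset.sum_congr rfl fun j _ => ?_
    cases ε j <;> cases σ j <;> simp
  rw [rademacherSeminorm_apply, rademacherSeminorm_apply, this, LinearIsometryEquiv.norm_map]

end RademacherSeminorm

section Operators

variable {X Y : Type*} [NormedAddCommGroup X] [NormedSpace ℂ X]
  [NormedAddCommGroup Y] [NormedSpace ℂ Y]

theorem balancedHull_subset_absConvexHull_add_I_smul {E : Type*} [AddCommGroup E] [Module ℂ E]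
    [Module ℝ E] [IsScalarTower ℝ ℂ E] {s : Set E} :
    balancedHull ℂ s ⊆ absConvexHull ℝ s + Complex.I • absConvexHull ℝ s := by
  intro a ha
  obtain ⟨θ, hθ, y, hy, rfl⟩ := mem_balancedHull_iff.1 ha
  have hmem : ∀ r : ℝ, |r| ≤ 1 → r • y ∈ absConvexHull ℝ s := fun r hr =>
    balanced_absConvexHull.smul_mem (by rwa [Real.norm_eq_abs]) (subset_absConvexHull hy)
  refine ⟨θ.re • y, hmem _ ((Complex.abs_re_le_norm θ).trans hθ), Complex.I • (θ.im • y),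
    Set.smul_mem_smul_set (hmem _ ((Complex.abs_im_le_norm θ).trans hθ)), ?_⟩
  show θ.re • y + Complex.I • (θ.im • y) = θ • y
  rw [← algebraMap_smul ℂ θ.re, ← algebraMap_smul ℂ θ.im, smul_smul, ← add_smul]
  congr 1
  simpa [mul_comm] using Complex.re_add_im θ

theorem absConvexHull_subset_convexHull_balancedHull {𝒯 : Set (X →L[ℂ] Y)} :
    AbsConvexHull 𝒯 ⊆ convexHull ℝ (balancedHull ℂ 𝒯) := by
  rintro S ⟨n, T, l, hT, hl, rfl⟩
  let u : Fin n → ℂ := fun k => Complex.exp (Complex.arg (l k) * Complex.I)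
  have hlu : ∀ k, l k • T k = ‖l k‖ • (u k • T k) := fun k => by
    rw [← smul_assoc, Complex.real_smul, Complex.norm_mul_exp_arg_mul_I]
  simp_rw [hlu]
  refine (convex_convexHull ℝ _).sum_mem (fun k _ => norm_nonneg _) hl fun k _ =>
    subset_convexHull ℝ _ (mem_balancedHull_iff.2 ⟨u k, ?_, Set.smul_mem_smul_set (hT k)⟩)
  exact (Complex.norm_exp_ofReal_mul_I _).le

theorem apply_mem_closure_of_mem_strongOpClosure {𝒜 : Set (X →L[ℂ] Y)} {N : ℕ}
    {S : Fin N → X →L[ℂ] Y} (hS : ∀ j, S j ∈ StrongOpClosure 𝒜) (x : Fin N → X) :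
    (fun j => S j (x j)) ∈ closure ((fun A j => A j (x j)) '' Set.univ.pi fun _ => 𝒜) := by
  refine Metric.mem_closure_iff.2 fun δ hδ => ?_
  choose A hA hSA using fun j => hS j 1 (fun _ => x j) δ hδ
  exact ⟨_, ⟨A, fun j _ => hA j, rfl⟩, (dist_pi_lt_iff hδ).2 fun j => by
    simpa [dist_eq_norm] using hSA j 0⟩

def IsRBoundedWith (p : ℝ≥0∞) [Fact (1 ≤ p)] (𝒯 : Set (X →L[ℂ] Y)) (C : ℝ) : Prop :=
  ∀ (N : ℕ) (T : Fin N → X →L[ℂ] Y), (∀ j, T j ∈ 𝒯) → ∀ x : Fin N → X,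
    rademacherSeminorm p (fun j => T j (x j)) ≤ C * rademacherSeminorm p x

theorem isRpBoundedWith_iff {p : ℝ} [Fact (1 ≤ ENNReal.ofReal p)] {𝒯 : Set (X →L[ℂ] Y)}
    {C : ℝ} : IsRpBoundedWith p 𝒯 C ↔ IsRBoundedWith (ENNReal.ofReal p) 𝒯 C := by
  have hp : 1 ≤ p := ENNReal.one_le_ofReal.1 Fact.out
  have hp' : (ENNReal.ofReal p).toReal = p := ENNReal.toReal_ofReal (by linarith)
  have hp0 : 0 < (ENNReal.ofReal p).toReal := by rw [hp']; linarith
  simp only [IsRpBoundedWith, IsRBoundedWith, rademacherSeminorm_eq_sum _ hp0, hp']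

namespace IsRBoundedWith

variable {p : ℝ≥0∞} [Fact (1 ≤ p)] {𝒮 𝒯 : Set (X →L[ℂ] Y)} {C D : ℝ}

theorem mono (h : IsRBoundedWith p 𝒯 C) (hs : 𝒮 ⊆ 𝒯) : IsRBoundedWith p 𝒮 C :=
  fun N T hT => h N T fun j => hs (hT j)

theorem union_neg (h : IsRBoundedWith p 𝒯 C) : IsRBoundedWith p (𝒯 ∪ -𝒯) C := by
  intro N T hT x
  have : ∀ j, ∃ σ : Bool, ∃ U ∈ 𝒯, T j = if σ then U else -U := fun j => by
    rcases hT j with hj | hj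
    · exact ⟨true, T j, hj, rfl⟩
    · exact ⟨false, -T j, hj, by simp⟩
  choose σ U hU hTU using this
  have hTx : (fun j => T j (x j)) = fun j => if σ j then U j (x j) else -(U j (x j)) := by
    funext j; rw [hTU j]; split_ifs <;> rfl
  rw [hTx, rademacherSeminorm_signFlip]
  exact h N U hU x

theorem convexHull (h : IsRBoundedWith p 𝒯 C) : IsRBoundedWith p (convexHull ℝ 𝒯) C := by
  intro N T hT x
  let eval : (Fin N → X →L[ℂ] Y) →ₗ[ℝ] (Fin N → Y) :=
    { toFun := fun A j => A j (x j), map_add' := fun _ _ => rfl, map_smul' := fun _ _ => rfl }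
  have hconv := (rademacherSeminorm p (N := N) (Z := Y)).convexOn.comp_linearMap eval
  have hT' : T ∈ _root_.convexHull ℝ (Set.univ.pi fun _ => 𝒯) := by
    rw [convexHull_pi]; exact fun j _ => hT j
  obtain ⟨U, hU, hTU⟩ := hconv.exists_ge_of_mem_convexHull (fun _ _ => trivial) hT'
  exact hTU.trans (h N U (fun j => hU j (Set.mem_univ j)) x)

theorem absConvexHull (h : IsRBoundedWith p 𝒯 C) : IsRBoundedWith p (absConvexHull ℝ 𝒯) C := by
  rw [← convexHull_union_neg_eq_absConvexHull]
  exact h.union_neg.convexHull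

theorem add (h𝒮 : IsRBoundedWith p 𝒮 C) (h𝒯 : IsRBoundedWith p 𝒯 D) :
    IsRBoundedWith p (𝒮 + 𝒯) (C + D) := by
  intro N T hT x
  choose U hU V hV hUV using hT
  calc rademacherSeminorm p (fun j => T j (x j))
      = rademacherSeminorm p ((fun j => U j (x j)) + fun j => V j (x j)) := by
        simp_rw [← hUV]; rfl
    _ ≤ rademacherSeminorm p (fun j => U j (x j)) + rademacherSeminorm p (fun j => V j (x j)) :=
        map_add_le_add _ _ _
    _ ≤ C * rademacherSeminorm p x + D * rademacherSeminorm p x :=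
        add_le_add (h𝒮 N U hU x) (h𝒯 N V hV x)
    _ = (C + D) * rademacherSeminorm p x := by ring

theorem smul (h : IsRBoundedWith p 𝒯 C) (c : ℂ) : IsRBoundedWith p (c • 𝒯) (‖c‖ * C) := by
  intro N T hT x
  choose U hU hUT using hT
  calc rademacherSeminorm p (fun j => T j (x j))
      = rademacherSeminorm p (c • fun j => U j (x j)) := by
        simp_rw [← hUT]; rfl
    _ = ‖c‖ * rademacherSeminorm p (fun j => U j (x j)) := map_smul_eq_mul _ _ _
    _ ≤ ‖c‖ * (C * rademacherSeminorm p x) := by gcongr; exact h N U hU x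
    _ = ‖c‖ * C * rademacherSeminorm p x := by ring

theorem balancedHull (h : IsRBoundedWith p 𝒯 C) : IsRBoundedWith p (balancedHull ℂ 𝒯) (2 * C) := by
  have hA := h.absConvexHull
  have := (hA.add (hA.smul Complex.I)).mono balancedHull_subset_absConvexHull_add_I_smul
  rwa [Complex.norm_I, one_mul, ← two_mul] at this

theorem strongOpClosure (h : IsRBoundedWith p 𝒯 C) : IsRBoundedWith p (StrongOpClosure 𝒯) C := by
  intro N S hS x
  have hclosed : IsClosed {y : Fin N → Y | rademacherSeminorm p y ≤ C * rademacherSeminorm p x} :=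
    isClosed_le (continuous_rademacherSeminorm p) continuous_const
  refine hclosed.closure_subset_iff.2 ?_ (apply_mem_closure_of_mem_strongOpClosure hS x)
  rintro _ ⟨A, hA, rfl⟩
  exact h N A (fun j => hA j (Set.mem_univ j)) x

end IsRBoundedWith

end Operators

theorem isRpBoundedWith_strongClosure_absConvexHull_general
    {X Y : Type*} [NormedAddCommGroup X] [NormedSpace ℂ X]
    [NormedAddCommGroup Y] [NormedSpace ℂ Y]
    (p : ℝ) (hp : 1 ≤ p) (𝒯 : Set (X →L[ℂ] Y)) (C : ℝ)
    (h : IsRpBoundedWith p 𝒯 C) :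
    IsRpBoundedWith p (StrongOpClosure (AbsConvexHull 𝒯)) (2 * C) := by
  have : Fact (1 ≤ ENNReal.ofReal p) := ⟨ENNReal.one_le_ofReal.2 hp⟩
  rw [isRpBoundedWith_iff] at h ⊢
  have hAbs := h.balancedHull.convexHull.mono absConvexHull_subset_convexHull_balancedHull
  exact hAbs.strongOpClosure

/-- The strong-operator closure of the absolute convex hull of an `R_p`-bounded
family with bound `C` is `R_p`-bounded with bound at most `2C`. -/
theorem isRpBoundedWith_strongClosure_absConvexHull
    {X Y : Type*} [NormedAddCommGroup X] [NormedSpace ℂ X] [CompleteSpace X]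
    [NormedAddCommGroup Y] [NormedSpace ℂ Y] [CompleteSpace Y]
    (p : ℝ) (hp : 1 ≤ p) (𝒯 : Set (X →L[ℂ] Y)) (C : ℝ)
    (h : IsRpBoundedWith p 𝒯 C) :
    IsRpBoundedWith p (StrongOpClosure (AbsConvexHull 𝒯)) (2 * C) :=
  isRpBoundedWith_strongClosure_absConvexHull_general p hp 𝒯 C h
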